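/- Let G be a CADMG with districts D_1, …, D_k and let < be any topological ordering of V. Suppose p_{V|W}(x_V | x_W) = ∏_{i=1}^k r_i(x_{D_i} | x_{pa_G(D_i)\D_i}), where each r_i is a kernel for D_i given pa_G(D_i) \ D_i that recursively factorizes according to G[D_i]. Then for each i and all x, r_i(x_{D_i} | x_{pa_G(D_i)\D_i}) = ∏_{v ∈ D_i} p_{v|pre_<(v),W}(x_v | x_{pre_<(v)}, x_W), where each factor p_{v|pre_<(v),W} is a suitably chosen p_{V|W}-version of the conditional distribution of X_v given X_{pre_<(v)} and X_W (the g-formula). -/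

import Mathlib

open Classical

noncomputable section

/-- A conditional acyclic directed mixed graph (CADMG): disjoint sets of random
vertices `V` and fixed vertices `W`, directed edges into `V` with no loops or
directed cycles, symmetric bidirected edges between distinct random vertices,
and every fixed vertex has at least one child. -/
structure CADMG (α : Type) where
  V : Set α
  W : Set α
  dir : Set (α × α)
  bi : Set (α × α)
  disjointVW : Disjoint V W
  dir_mem : ∀ e ∈ dir, e.1 ∈ V ∪ W ∧ e.2 ∈ V
  dir_irrefl : ∀ e ∈ dir, e.1 ≠ e.2
  acyclic : ∀ a b : α, Relation.ReflTransGen (fun x y => (x, y) ∈ dir) a b →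
      Relation.ReflTransGen (fun x y => (x, y) ∈ dir) b a → a = b
  bi_symm : ∀ a b : α, (a, b) ∈ bi → (b, a) ∈ bi
  bi_mem : ∀ e ∈ bi, e.1 ∈ V ∧ e.2 ∈ V
  bi_irrefl : ∀ e ∈ bi, e.1 ≠ e.2
  fixed_child : ∀ w ∈ W, ∃ v, (w, v) ∈ dir

namespace CADMG

variable {α : Type}

/-- The parents of a vertex. -/
def pa (G : CADMG α) (b : α) : Set α := {a | (a, b) ∈ G.dir}

/-- The parents of a set of vertices. -/
def paSet (G : CADMG α) (A : Set α) : Set α := {a | ∃ b ∈ A, (a, b) ∈ G.dir}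

/-- The ancestors of a set of vertices (every vertex is its own ancestor). -/
def anc (G : CADMG α) (A : Set α) : Set α :=
  {w | ∃ v ∈ A, Relation.ReflTransGen (fun x y => (x, y) ∈ G.dir) w v}

/-- An ancestral set contains all of its own ancestors. -/
def Ancestral (G : CADMG α) (A : Set α) : Prop := G.anc A = A

/-- A random-ancestral set: a set of random vertices all of whose ancestors are
in the set itself or fixed. -/
def RandomAncestral (G : CADMG α) (A : Set α) : Prop :=
  A ⊆ G.V ∧ G.anc A ⊆ A ∪ G.W

/-- The sterile subset of `C`: those members of `C` that are not parents of `C`. -/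
def sterile (G : CADMG α) (C : Set α) : Set α := C \ G.paSet C

/-- A bidirected-connected set of random vertices: every two members are joined by
a path of bidirected edges with all intermediate vertices inside the set. -/
def BiConn (G : CADMG α) (B : Set α) : Prop :=
  B ⊆ G.V ∧ ∀ a ∈ B, ∀ b ∈ B,
    Relation.ReflTransGen (fun x y => (x, y) ∈ G.bi ∧ x ∈ B ∧ y ∈ B) a b

/-- A district: a maximal bidirected-connected set of random vertices. -/
def IsDistrict (G : CADMG α) (D : Set α) : Prop :=
  D.Nonempty ∧ G.BiConn D ∧ ∀ D', G.BiConn D' → D ⊆ D' → D' = D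

/-- `dis G B`: the union of the districts of `G` meeting `B`. -/
def dis (G : CADMG α) (B : Set α) : Set α :=
  ⋃₀ {D | G.IsDistrict D ∧ (D ∩ B).Nonempty}

/-- The induced graph `G[C]`: random vertices `C`, fixed vertices `pa_G(C) \ C`,
the bidirected edges of `G` within `C` and the directed edges of `G` pointing
into `C`. -/
def induce (G : CADMG α) (C : Set α) : CADMG α where
  V := C ∩ G.V
  W := G.paSet (C ∩ G.V) \ (C ∩ G.V)
  dir := {e | e ∈ G.dir ∧ e.2 ∈ C ∩ G.V}
  bi := {e | e ∈ G.bi ∧ e.1 ∈ C ∩ G.V ∧ e.2 ∈ C ∩ G.V}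
  disjointVW := by
    rw [Set.disjoint_left]; rintro a ha ⟨-, h⟩; exact h ha
  dir_mem := by
    rintro e ⟨he, h2⟩
    refine ⟨?_, h2⟩
    by_cases h1 : e.1 ∈ C ∩ G.V
    · exact Or.inl h1
    · exact Or.inr ⟨⟨e.2, h2, he⟩, h1⟩
  dir_irrefl := fun e he => G.dir_irrefl e he.1
  acyclic := fun a b h1 h2 =>
    G.acyclic a b (Relation.ReflTransGen.mono (by exact fun x y h => h.1) a b h1)
      (Relation.ReflTransGen.mono (by exact fun x y h => h.1) b a h2)
  bi_symm := fun a b h => ⟨G.bi_symm a b h.1, h.2.2, h.2.1⟩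
  bi_mem := fun e he => ⟨he.2.1, he.2.2⟩
  bi_irrefl := fun e he => G.bi_irrefl e he.1
  fixed_child := by
    rintro w ⟨⟨b, hb, hwb⟩, -⟩
    exact ⟨b, hwb, hb⟩

/-- A CADMG `G'` is reachable from `G` if it is obtained by iteratively
restricting to a district (`𝔡`) or to a random-ancestral set (`𝔪`). -/
inductive Reach : CADMG α → CADMG α → Prop where
  | refl (G : CADMG α) : Reach G G
  | district {G₁ G₂ : CADMG α} {D : Set α} :
      Reach G₁ G₂ → G₂.IsDistrict D → Reach G₁ (G₂.induce D)
  | margin {G₁ G₂ : CADMG α} {A : Set α} :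
      Reach G₁ G₂ → G₂.RandomAncestral A → Reach G₁ (G₂.induce A)

/-- `G₁` is a subgraph of `G₂`. -/
def Subgraph (G₁ G₂ : CADMG α) : Prop :=
  G₁.V ⊆ G₂.V ∧ G₁.W ⊆ G₂.W ∧ G₁.dir ⊆ G₂.dir ∧ G₁.bi ⊆ G₂.bi

/-- An intrinsic set: a nonempty bidirected-connected set `S` of random vertices
such that `G[S]` is reachable from `G`. -/
def Intrinsic (G : CADMG α) (S : Set α) : Prop :=
  S.Nonempty ∧ G.BiConn S ∧ Reach G (G.induce S)

/-- The recursive heads of `G`: sterile subsets of intrinsic sets. -/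
def heads (G : CADMG α) : Set (Set α) :=
  {H | ∃ S, G.Intrinsic S ∧ G.sterile S = H}

/-- The (unique) intrinsic set whose recursive head is `H`. -/
def intrinsicOf (G : CADMG α) (H : Set α) : Set α :=
  ⋃₀ {S | G.Intrinsic S ∧ G.sterile S = H}

/-- The partial order on recursive heads: `H₁ ≺ H₂` iff the intrinsic set of
`H₁` is strictly contained in that of `H₂`. -/
def headLT (G : CADMG α) (H₁ H₂ : Set α) : Prop :=
  G.intrinsicOf H₁ ⊂ G.intrinsicOf H₂

/-- The tail of a recursive head: the parents of its intrinsic set. -/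
def tail (G : CADMG α) (H : Set α) : Set α := G.paSet (G.intrinsicOf H)

/-- One step of the intrinsic-closure iteration: restrict to the ancestors of
`B`, then to the districts meeting `B`. -/
def closureStep (B : Set α) (G : CADMG α) : CADMG α :=
  (G.induce (G.anc B)).induce ((G.induce (G.anc B)).dis B)

/-- The intrinsic closure `I_G(B)`: the random vertex set of the stable graph
obtained by repeatedly alternating restriction to the ancestors of `B` and to
the districts meeting `B`.  (After `Fintype.card α` rounds the iteration has
stabilised.) -/
def intrinsicClosure [Fintype α] (G : CADMG α) (B : Set α) : Set α :=
  ((closureStep B)^[Fintype.card α] G).V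

/-- `Φ_G(C)`: the `≺`-maximal recursive heads of `G` contained in `C`. -/
def Phi (G : CADMG α) (C : Set α) : Set (Set α) :=
  {H | H ∈ G.heads ∧ H ⊆ C ∧ ∀ H' ∈ G.heads, H' ⊆ C → H' ≠ H → ¬ G.headLT H H'}

/-- `ψ_G(C) = C \ ⋃ Φ_G(C)`. -/
def psi (G : CADMG α) (C : Set α) : Set α := C \ ⋃₀ G.Phi C

/-- The recursive-head partition `⟨C⟩_G`, defined by `⟨∅⟩ = ∅` and
`⟨C⟩ = Φ(C) ∪ ⟨ψ(C)⟩`.  (The guard on cardinalities is automatically satisfied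
whenever the recursion is used, since `ψ_G(C) ⊊ C` for nonempty `C`.) -/
def partn (G : CADMG α) (C : Set α) : Set (Set α) :=
  if C = ∅ then ∅
  else if h : (G.psi C).ncard < C.ncard then G.Phi C ∪ G.partn (G.psi C)
  else G.Phi C
termination_by C.ncard
decreasing_by exact h

/-- A kernel `p_{V|W}`, written as a function of a full assignment of binary
values to all vertices: it takes values in `[0,1]`, depends only on the
coordinates in `V ∪ W`, and for every assignment to `W` (and the remaining
coordinates) the values summed over assignments to `V` equal `1`. -/
def IsKernel [Fintype α] (V W : Set α) (p : (α → Bool) → ℝ) : Prop :=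
  (∀ x, 0 ≤ p x ∧ p x ≤ 1) ∧
  (∀ x y : α → Bool, (∀ v ∈ V ∪ W, x v = y v) → p x = p y) ∧
  (∀ x : α → Bool, ∑ g : α → Bool,
      (if ∀ v, v ∉ V → g v = x v then p g else 0) = 1)

/-- Sum a function of assignments over all values of the coordinates in `D`
(the marginal summing out the variables in `D`). -/
def marginOut [Fintype α] (D : Set α) (p : (α → Bool) → ℝ) (x : α → Bool) : ℝ :=
  ∑ g : α → Bool, if ∀ v, v ∉ D → g v = x v then p g else 0

/-- `q` is a version of the conditional kernel of `A` given `B` and `W`, derived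
from the kernel `p = p_{V|W}`. -/
def IsCondVersion [Fintype α] (V W A B : Set α)
    (p q : (α → Bool) → ℝ) : Prop :=
  IsKernel A (B ∪ W) q ∧
  ∀ x : α → Bool, q x * marginOut (V \ B) p x = marginOut (V \ (A ∪ B)) p x

/-- Recursive factorization of a kernel `p` according to a CADMG `G`
(the nested Markov property): either `|V| = 1`, or (i) `p` factorizes into
kernels indexed by the districts of `G`, each of which (when there are at least
two districts) recursively factorizes according to the induced graph, and
(ii) for every ancestral set `A` with `V \ A ≠ ∅` the margin over `A` does not
depend on the fixed coordinates outside `A` and recursively factorizes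
according to `G[V ∩ A]`. -/
inductive RF [Fintype α] : CADMG α → ((α → Bool) → ℝ) → Prop where
  | base (G : CADMG α) (p : (α → Bool) → ℝ) (h : G.V.ncard = 1) : RF G p
  | factor (G : CADMG α) (p : (α → Bool) → ℝ)
      (Ds : Finset (Set α)) (r : Set α → (α → Bool) → ℝ)
      (hDs : ∀ D, G.IsDistrict D ↔ D ∈ Ds)
      (hker : ∀ D ∈ Ds, IsKernel D (G.paSet D \ D) (r D))
      (hfact : ∀ x, p x = ∏ D ∈ Ds, r D x)
      (hrec : 2 ≤ Ds.card → ∀ D ∈ Ds, RF (G.induce D) (r D))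
      (hmarg_nodep : ∀ A : Set α, G.Ancestral A → (G.V \ A).Nonempty →
        ∀ x y : α → Bool, (∀ v ∈ (G.V ∩ A) ∪ (G.W ∩ A), x v = y v) →
          marginOut (G.V \ A) p x = marginOut (G.V \ A) p y)
      (hmarg_rf : ∀ A : Set α, G.Ancestral A → (G.V \ A).Nonempty →
        RF (G.induce (G.V ∩ A)) (marginOut (G.V \ A) p)) :
      RF G p

/-- The alternating sum `Σ_{O ⊆ C ⊆ U} (−1)^{|C\O|} ∏_{H ∈ ⟨C⟩_G} q_H(x_T)`. -/
def altSum (G : CADMG α) (q : Set α → (α → Bool) → ℝ) (x : α → Bool)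
    (O U : Set α) : ℝ :=
  ∑ᶠ C ∈ {C : Set α | O ⊆ C ∧ C ⊆ U},
    (-1 : ℝ) ^ (C \ O).ncard * ∏ᶠ H ∈ G.partn C, q H x

/-- A kernel `p` is parameterized according to `G`: there are parameters
`q_H(x_T)` (one real number for each recursive head `H` and each value `x_T` of
its tail `T`) with
`p(x_V | x_W) = Σ_{O ⊆ C ⊆ V} (−1)^{|C\O|} ∏_{H ∈ ⟨C⟩_G} q_H(x_T)`,
where `O = {v ∈ V : x_v = 0}`. -/
def Parameterized [Fintype α] (G : CADMG α) (p : (α → Bool) → ℝ) : Prop :=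
  ∃ q : Set α → (α → Bool) → ℝ,
    (∀ H ∈ G.heads, ∀ x y : α → Bool,
        (∀ v ∈ G.tail H, x v = y v) → q H x = q H y) ∧
    ∀ x : α → Bool,
      p x = G.altSum q x {v | v ∈ G.V ∧ x v = false} G.V

end CADMG

/-!
Fix an upper set `U` of the topological order.  Summing `p` over the random vertices in `U`
still factorizes over the districts: `∑_{V ∩ U} p = ∏_D ∑_{D ∩ U} r_D`.  Indeed, summing out
the earliest vertex `a` of `V ∩ U` only affects the factor of the district of `a`, because for
every other district `D` the margin `∑_{D ∩ U} r_D` depends only on `W` and on the random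
vertices outside `U`: together with its parents outside `D`, the set `D \ U` is ancestral in
`G[D]`, so this is condition (ii) of the recursive factorization of `r_D`.

The factor of `v` in the g-formula is the chain-rule conditional of `x v` inside its district
`D`, namely `∑_{D ∩ (v, ∞)} r_D / ∑_{D ∩ [v, ∞)} r_D`.  By the factorization above (for
`U = [v, ∞)` and `U = (v, ∞)`) it is a version of `p(x_v | x_{pre(v)}, x_W)`, and the product
of these conditionals over `D` telescopes to `r_D`.
-/

namespace CADMG

variable {α : Type}

section Margins

variable [Fintype α]

lemma marginOut_empty (p : (α → Bool) → ℝ) (x : α → Bool) : marginOut ∅ p x = p x := by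
  rw [marginOut, Finset.sum_eq_single_of_mem x (Finset.mem_univ x)]
  · simp
  · intro g _ hg
    exact if_neg fun h => hg (funext fun u => h u (Set.notMem_empty u))

lemma marginOut_congr (p : (α → Bool) → ℝ) {S : Set α} {x y : α → Bool}
    (hxy : ∀ u ∉ S, x u = y u) : marginOut S p x = marginOut S p y := by
  have hiff : ∀ g : α → Bool, (∀ u, u ∉ S → g u = x u) ↔ (∀ u, u ∉ S → g u = y u) :=
    fun g => forall₂_congr fun u hu => by rw [hxy u hu]
  simp only [marginOut, hiff]

lemma marginOut_nonneg {p : (α → Bool) → ℝ} (hp : ∀ g, 0 ≤ p g) (S : Set α)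
    (x : α → Bool) : 0 ≤ marginOut S p x :=
  Finset.sum_nonneg fun g _ => by split <;> simp [hp g]

lemma marginOut_mono {p : (α → Bool) → ℝ} (hp : ∀ g, 0 ≤ p g) {S T : Set α}
    (hST : S ⊆ T) (x : α → Bool) : marginOut S p x ≤ marginOut T p x := by
  refine Finset.sum_le_sum fun g _ => ?_
  by_cases h : ∀ u, u ∉ S → g u = x u
  · rw [if_pos h, if_pos fun u hu => h u fun huS => hu (hST huS)]
  · rw [if_neg h]
    split <;> simp [hp g]

lemma marginOut_insert [DecidableEq α] (p : (α → Bool) → ℝ) {S : Set α} {v : α} (hv : v ∉ S)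
    (x : α → Bool) :
    marginOut (insert v S) p x =
      marginOut S p (Function.update x v true) + marginOut S p (Function.update x v false) := by
  rw [marginOut, marginOut, marginOut, ← Finset.sum_add_distrib]
  refine Finset.sum_congr rfl fun g _ => ?_
  have hsplit : ∀ b : Bool, (∀ u, u ∉ S → g u = Function.update x v b u) ↔
      g v = b ∧ ∀ u, u ∉ insert v S → g u = x u := by
    intro b
    constructor
    · intro h
      refine ⟨by simpa using h v hv, fun u hu => ?_⟩
      rw [Set.mem_insert_iff, not_or] at hu
      simpa [Function.update_of_ne hu.1] using h u hu.2
    · rintro ⟨rfl, h⟩ u hu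
      by_cases huv : u = v
      · subst huv; simp
      · rw [Function.update_of_ne huv]
        exact h u fun h' => (Set.mem_insert_iff.mp h').elim huv hu
  simp only [hsplit]
  cases g v <;> simp

/-- On a null conditioning event the value is `1 / 2` rather than the junk `0 / 0 = 0`,
so that `condKernel v S p` is still a kernel for `x v`. -/
def condKernel (v : α) (S : Set α) (p : (α → Bool) → ℝ) (x : α → Bool) : ℝ :=
  if marginOut (insert v S) p x = 0 then 1 / 2
  else marginOut S p x / marginOut (insert v S) p x

variable {p : (α → Bool) → ℝ} {S : Set α} {v : α}

lemma condKernel_mul_marginOut (hp : ∀ g, 0 ≤ p g) (x : α → Bool) :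
    condKernel v S p x * marginOut (insert v S) p x = marginOut S p x := by
  unfold condKernel
  split_ifs with h0
  · rw [h0, mul_zero]
    exact (le_antisymm (h0 ▸ marginOut_mono hp (Set.subset_insert v S) x)
      (marginOut_nonneg hp S x)).symm
  · exact div_mul_cancel₀ _ h0

lemma condKernel_update_add [DecidableEq α] (hv : v ∉ S) (x : α → Bool) :
    condKernel v S p (Function.update x v true) +
      condKernel v S p (Function.update x v false) = 1 := by
  have hupdate : ∀ b, marginOut (insert v S) p (Function.update x v b) =
      marginOut (insert v S) p x := fun b =>
    marginOut_congr p fun u hu =>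
      Function.update_of_ne (by rintro rfl; exact hu (Set.mem_insert u S)) b x
  unfold condKernel
  rw [hupdate, hupdate]
  split_ifs with h0
  · norm_num
  · rw [← add_div, ← marginOut_insert p hv, div_self h0]

lemma isKernel_condKernel (hp : ∀ g, 0 ≤ p g) (hv : v ∉ S) {E : Set α}
    (hS : ∀ x y : α → Bool, (∀ u ∈ {v} ∪ E, x u = y u) → marginOut S p x = marginOut S p y) :
    IsKernel {v} E (condKernel v S p) := by
  have hvS : ∀ x y : α → Bool, (∀ u ∈ {v} ∪ E, x u = y u) →
      marginOut (insert v S) p x = marginOut (insert v S) p y := by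
    intro x y hxy
    have hupd : ∀ b, ∀ u ∈ {v} ∪ E, Function.update x v b u = Function.update y v b u := by
      intro b u hu
      by_cases huv : u = v
      · simp [huv]
      · simp [Function.update_of_ne huv, hxy u hu]
    rw [marginOut_insert p hv, marginOut_insert p hv, hS _ _ (hupd true), hS _ _ (hupd false)]
  refine ⟨fun x => ⟨?_, ?_⟩, fun x y hxy => ?_, fun x => ?_⟩
  · unfold condKernel
    split_ifs
    · norm_num
    · exact div_nonneg (marginOut_nonneg hp S x) (marginOut_nonneg hp _ x)
  · unfold condKernel
    split_ifs
    · norm_num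
    · exact div_le_one_of_le₀ (marginOut_mono hp (Set.subset_insert v S) x)
        (marginOut_nonneg hp _ x)
  · unfold condKernel
    rw [hS x y hxy, hvS x y hxy]
  · change marginOut {v} (condKernel v S p) x = 1
    rw [← insert_empty_eq v, marginOut_insert _ (Set.notMem_empty v), marginOut_empty,
      marginOut_empty, condKernel_update_add hv]

theorem prod_condKernel_mul_marginOut [LinearOrder α] (hp : ∀ g, 0 ≤ p g) (s : Finset α)
    (x : α → Bool) :
    (∏ w ∈ s, condKernel w (↑s ∩ Set.Ioi w) p x) * marginOut ↑s p x = p x := by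
  induction s using Finset.induction_on_min with
  | empty => simp [marginOut_empty]
  | insert a s has ih =>
    have hsa : (↑(insert a s) : Set α) ∩ Set.Ioi a = ↑s := by
      ext u
      simp only [Finset.coe_insert, Set.mem_inter_iff, Set.mem_insert_iff, Finset.mem_coe,
        Set.mem_Ioi]
      exact ⟨fun ⟨h, hau⟩ => h.resolve_left hau.ne', fun hu => ⟨Or.inr hu, has u hu⟩⟩
    have hsw : ∀ w ∈ s, (↑(insert a s) : Set α) ∩ Set.Ioi w = ↑s ∩ Set.Ioi w := by
      intro w hw
      ext u
      simp only [Finset.coe_insert, Set.mem_inter_iff, Set.mem_insert_iff, Finset.mem_coe,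
        Set.mem_Ioi]
      refine ⟨fun ⟨h, hwu⟩ => ⟨h.resolve_left ?_, hwu⟩, fun ⟨hu, hwu⟩ => ⟨Or.inr hu, hwu⟩⟩
      rintro rfl
      exact lt_asymm hwu (has w hw)
    calc (∏ w ∈ insert a s, condKernel w (↑(insert a s) ∩ Set.Ioi w) p x) *
          marginOut ↑(insert a s) p x
        = (∏ w ∈ s, condKernel w (↑s ∩ Set.Ioi w) p x) *
            (condKernel a ↑s p x * marginOut (insert a ↑s) p x) := by
          rw [Finset.prod_insert fun h => lt_irrefl a (has a h), hsa,
            Finset.prod_congr rfl fun w hw => by rw [hsw w hw], Finset.coe_insert]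
          ring
      _ = p x := by rw [condKernel_mul_marginOut hp, ih]

end Margins

section Districts

variable {G : CADMG α}

lemma BiConn.union {B₁ B₂ : Set α} (h₁ : G.BiConn B₁) (h₂ : G.BiConn B₂) {v : α}
    (hv₁ : v ∈ B₁) (hv₂ : v ∈ B₂) : G.BiConn (B₁ ∪ B₂) := by
  have lift : ∀ B ⊆ B₁ ∪ B₂, ∀ a b,
      Relation.ReflTransGen (fun x y => (x, y) ∈ G.bi ∧ x ∈ B ∧ y ∈ B) a b →
      Relation.ReflTransGen (fun x y => (x, y) ∈ G.bi ∧ x ∈ B₁ ∪ B₂ ∧ y ∈ B₁ ∪ B₂) a b :=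
    fun B hB a b => Relation.ReflTransGen.mono (fun x y h => ⟨h.1, hB h.2.1, hB h.2.2⟩) a b
  refine ⟨Set.union_subset h₁.1 h₂.1, ?_⟩
  rintro a (ha | ha) b (hb | hb)
  · exact lift B₁ Set.subset_union_left a b (h₁.2 a ha b hb)
  · exact (lift B₁ Set.subset_union_left a v (h₁.2 a ha v hv₁)).trans
      (lift B₂ Set.subset_union_right v b (h₂.2 v hv₂ b hb))
  · exact (lift B₂ Set.subset_union_right a v (h₂.2 a ha v hv₂)).trans
      (lift B₁ Set.subset_union_left v b (h₁.2 v hv₁ b hb))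
  · exact lift B₂ Set.subset_union_right a b (h₂.2 a ha b hb)

lemma IsDistrict.eq_of_mem {D₁ D₂ : Set α} (h₁ : G.IsDistrict D₁) (h₂ : G.IsDistrict D₂)
    {v : α} (hv₁ : v ∈ D₁) (hv₂ : v ∈ D₂) : D₁ = D₂ := by
  have hu := h₁.2.1.union h₂.2.1 hv₁ hv₂
  exact (h₁.2.2 _ hu Set.subset_union_left).symm.trans (h₂.2.2 _ hu Set.subset_union_right)

lemma exists_isDistrict_mem [Finite α] {v : α} (hv : v ∈ G.V) :
    ∃ D, G.IsDistrict D ∧ v ∈ D := by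
  have hsingle : G.BiConn {v} ∧ v ∈ ({v} : Set α) := by
    refine ⟨⟨Set.singleton_subset_iff.mpr hv, ?_⟩, rfl⟩
    rintro a rfl b rfl
    exact Relation.ReflTransGen.refl
  obtain ⟨D, -, ⟨hD, hvD⟩, hmax⟩ :=
    Finite.exists_le_maximal (p := fun D : Set α => G.BiConn D ∧ v ∈ D) hsingle
  exact ⟨D, ⟨⟨v, hvD⟩, hD, fun D' hD' hDD' => (hmax ⟨hD', hDD' hvD⟩ hDD').antisymm hDD'⟩, hvD⟩

lemma isDistrict_dis_singleton [Finite α] {v : α} (hv : v ∈ G.V) :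
    G.IsDistrict (G.dis {v}) ∧ v ∈ G.dis {v} := by
  obtain ⟨D, hD, hvD⟩ := exists_isDistrict_mem hv
  have hdis : G.dis {v} = D := by
    apply subset_antisymm
    · rintro u ⟨D', ⟨hD', w, hwD', rfl⟩, huD'⟩
      exact hD'.eq_of_mem hD hwD' hvD ▸ huD'
    · exact fun u hu => ⟨D, ⟨hD, v, hvD, rfl⟩, hu⟩
  exact hdis ▸ ⟨hD, hvD⟩

end Districts

lemma _root_.Set.inter_inter_Ioi_eq_sdiff [LinearOrder α] {S U : Set α} {a : α}
    (h : ∀ u ∈ S ∩ U, u ≠ a → a < u) : S ∩ (U ∩ Set.Ioi a) = (S ∩ U) \ {a} := by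
  ext u
  constructor
  · rintro ⟨huS, huU, hau⟩
    exact ⟨⟨huS, huU⟩, hau.ne'⟩
  · rintro ⟨hu, hua⟩
    exact ⟨hu.1, hu.2, h u hu hua⟩

section TopologicalOrder

variable [LinearOrder α] {G : CADMG α}

def IsTopologicalOrder (G : CADMG α) : Prop := ∀ e ∈ G.dir, e.1 ∈ G.V → e.1 < e.2

lemma IsTopologicalOrder.paSet_subset (htop : G.IsTopologicalOrder) {U : Set α}
    (hU : IsUpperSet U) {S : Set α} (hS : S ⊆ G.V \ U) : G.paSet S ⊆ G.W ∪ G.V \ U := by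
  rintro u ⟨s, hs, hus⟩
  rcases (G.dir_mem _ hus).1 with huV | huW
  · exact Or.inr ⟨huV, fun huU => (hS hs).2 (hU (htop _ hus huV).le huU)⟩
  · exact Or.inl huW

lemma IsTopologicalOrder.ancestral_induce (htop : G.IsTopologicalOrder) {D : Set α}
    (hDV : D ⊆ G.V) {U : Set α} (hU : IsUpperSet U) :
    (G.induce D).Ancestral (D \ U ∪ (G.paSet (D \ U) \ D)) := by
  refine subset_antisymm ?_ fun w hw => ⟨w, hw, Relation.ReflTransGen.refl⟩
  rintro w ⟨d, hd, hpath⟩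
  induction hpath using Relation.ReflTransGen.head_induction_on with
  | refl => exact hd
  | @head a c hac _ ih =>
    obtain ⟨hdir, hcD, -⟩ := hac
    have hcDU : c ∈ D \ U := ih.resolve_right fun h => h.2 hcD
    by_cases haD : a ∈ D
    · exact Or.inl ⟨haD, fun haU => hcDU.2 (hU (htop _ hdir (hDV haD)).le haU)⟩
    · exact Or.inr ⟨⟨c, hcDU, hdir⟩, haD⟩

theorem IsTopologicalOrder.marginOut_inter_congr [Fintype α] (htop : G.IsTopologicalOrder)
    {D : Set α} (hDV : D ⊆ G.V) {r : (α → Bool) → ℝ} (hker : IsKernel D (G.paSet D \ D) r)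
    (hrf : RF (G.induce D) r) {U : Set α} (hU : IsUpperSet U) {x y : α → Bool}
    (hxy : ∀ u ∈ G.W ∪ G.V \ U, x u = y u) :
    marginOut (D ∩ U) r x = marginOut (D ∩ U) r y := by
  have hDU : D \ U ⊆ G.V \ U := Set.sdiff_subset_sdiff_left hDV
  have hGD : (G.induce D).V = D := Set.inter_eq_self_of_subset_left hDV
  rcases (D ∩ U).eq_empty_or_nonempty with hempty | hne
  · have hDU' : D \ U = D := sdiff_eq_left.mpr (Set.disjoint_iff_inter_eq_empty.mpr hempty)
    rw [hempty, marginOut_empty, marginOut_empty]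
    refine hker.2.1 x y fun u hu => hxy u ?_
    rw [← hDU'] at hu
    rcases hu with hu | hu
    · exact Or.inr (hDU hu)
    · exact htop.paSet_subset hU hDU hu.1
  cases hrf with
  | base _ _ hone =>
    obtain ⟨d, rfl⟩ := Set.ncard_eq_one.mp (hGD ▸ hone)
    obtain ⟨u, hu, huU⟩ := hne
    rw [Set.mem_singleton_iff.mp hu] at huU
    rw [Set.inter_eq_self_of_subset_left (Set.singleton_subset_iff.mpr huU)]
    exact (hker.2.2 x).trans (hker.2.2 y).symm
  | factor _ _ _ _ _ _ _ _ hnodep _ =>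
    set A := D \ U ∪ (G.paSet (D \ U) \ D)
    have hVA : (G.induce D).V \ A = D ∩ U := by
      rw [hGD]
      ext u
      simp only [A, Set.mem_sdiff, Set.mem_union, Set.mem_inter_iff]
      tauto
    have hA : A ⊆ G.W ∪ G.V \ U := Set.union_subset (hDU.trans Set.subset_union_right)
      (Set.sdiff_subset.trans (htop.paSet_subset hU hDU))
    rw [← hVA]
    exact hnodep A (htop.ancestral_induce hDV hU) (hVA ▸ hne) x y fun u hu =>
      hxy u (hA (hu.elim (·.2) (·.2)))

theorem IsTopologicalOrder.marginOut_inter_update [Fintype α] [DecidableEq α]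
    (htop : G.IsTopologicalOrder) {D : Set α} (hDV : D ⊆ G.V) {r : (α → Bool) → ℝ}
    (hker : IsKernel D (G.paSet D \ D) r) (hrf : RF (G.induce D) r) {U : Set α}
    (hU : IsUpperSet U) {a : α} (ha : a ∈ G.V ∩ U) (b : Bool) (x : α → Bool) :
    marginOut (D ∩ U) r (Function.update x a b) = marginOut (D ∩ U) r x := by
  refine htop.marginOut_inter_congr hDV hker hrf hU fun u hu => Function.update_of_ne ?_ b x
  rintro rfl
  rcases hu with huW | huVU
  · exact Set.disjoint_left.mp G.disjointVW ha.1 huW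
  · exact huVU.2 ha.2

end TopologicalOrder

structure IsDistrictFactorization [Fintype α] (G : CADMG α) (p : (α → Bool) → ℝ)
    (Ds : Finset (Set α)) (r : Set α → (α → Bool) → ℝ) : Prop where
  isDistrict_iff : ∀ D, G.IsDistrict D ↔ D ∈ Ds
  isKernel : ∀ D ∈ Ds, IsKernel D (G.paSet D \ D) (r D)
  rf : ∀ D ∈ Ds, RF (G.induce D) (r D)
  eq_prod : ∀ x, p x = ∏ D ∈ Ds, r D x

def gFactor [Fintype α] [LinearOrder α] (G : CADMG α) (r : Set α → (α → Bool) → ℝ) (v : α) :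
    (α → Bool) → ℝ :=
  condKernel v (G.dis {v} ∩ Set.Ioi v) (r (G.dis {v}))

namespace IsDistrictFactorization

variable [Fintype α] {G : CADMG α} {p : (α → Bool) → ℝ} {Ds : Finset (Set α)}
  {r : Set α → (α → Bool) → ℝ}

lemma subset_V (hF : IsDistrictFactorization G p Ds r) {D : Set α} (hD : D ∈ Ds) : D ⊆ G.V :=
  ((hF.isDistrict_iff D).mpr hD).2.1.1

lemma dis_singleton_mem (hF : IsDistrictFactorization G p Ds r) {v : α} (hv : v ∈ G.V) :
    G.dis {v} ∈ Ds :=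
  (hF.isDistrict_iff _).mp (isDistrict_dis_singleton hv).1

lemma dis_singleton_eq (hF : IsDistrictFactorization G p Ds r) {D : Set α} (hD : D ∈ Ds)
    {v : α} (hv : v ∈ D) : G.dis {v} = D :=
  have hdis := isDistrict_dis_singleton (hF.subset_V hD hv)
  hdis.1.eq_of_mem ((hF.isDistrict_iff D).mpr hD) hdis.2 hv

variable [LinearOrder α]

theorem marginOut_inter_eq_prod (hF : IsDistrictFactorization G p Ds r)
    (htop : G.IsTopologicalOrder) {U : Set α} (hU : IsUpperSet U) (x : α → Bool) :
    marginOut (G.V ∩ U) p x = ∏ D ∈ Ds, marginOut (D ∩ U) (r D) x := by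
  suffices ∀ s : Finset α, ∀ U : Set α, IsUpperSet U → G.V ∩ U = ↑s → ∀ x,
      marginOut (G.V ∩ U) p x = ∏ D ∈ Ds, marginOut (D ∩ U) (r D) x from
    this _ U hU (Set.coe_toFinset _).symm x
  intro s
  induction s using Finset.induction_on_min with
  | empty =>
    intro U _ hs x
    rw [hs, Finset.coe_empty, marginOut_empty, hF.eq_prod]
    refine Finset.prod_congr rfl fun D hD => ?_
    have hDU : D ∩ U ⊆ G.V ∩ U := Set.inter_subset_inter_left U (hF.subset_V hD)
    rw [hs, Finset.coe_empty] at hDU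
    rw [Set.subset_empty_iff.mp hDU, marginOut_empty]
  | insert a s has ih =>
    intro U hU hs x
    have haVU : a ∈ G.V ∩ U := hs ▸ Finset.mem_insert_self a s
    set U' := U ∩ Set.Ioi a
    have hinter : ∀ S ⊆ G.V, S ∩ U' = (S ∩ U) \ {a} := by
      refine fun S hS => Set.inter_inter_Ioi_eq_sdiff fun u hu hua => has u ?_
      have hu : u ∈ insert a s := Finset.mem_coe.mp (hs ▸ (⟨hS hu.1, hu.2⟩ : u ∈ G.V ∩ U))
      exact (Finset.mem_insert.mp hu).resolve_left hua
    have hVU' : G.V ∩ U' = ↑s := by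
      rw [hinter _ subset_rfl, hs, Finset.coe_insert,
        Set.insert_sdiff_self_of_notMem fun h => lt_irrefl a (has a h)]
    have hinsert : ∀ S ⊆ G.V, a ∈ S → S ∩ U = insert a (S ∩ U') := fun S hS haS => by
      rw [hinter S hS, Set.insert_sdiff_singleton,
        Set.insert_eq_of_mem (show a ∈ S ∩ U from ⟨haS, haVU.2⟩)]
    have hnotmem : ∀ S : Set α, a ∉ S ∩ U' := fun S h => lt_irrefl a h.2.2
    have hD₀ := hF.dis_singleton_mem haVU.1
    have hrest : ∀ b, ∀ D ∈ Ds.erase (G.dis {a}),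
        marginOut (D ∩ U') (r D) (Function.update x a b) = marginOut (D ∩ U) (r D) x := by
      intro b D hD
      obtain ⟨hne, hD⟩ := Finset.mem_erase.mp hD
      have haD : a ∉ D := fun haD => hne (hF.dis_singleton_eq hD haD).symm
      rw [hinter D (hF.subset_V hD), Set.sdiff_singleton_eq_self fun h => haD h.1]
      exact htop.marginOut_inter_update (hF.subset_V hD) (hF.isKernel D hD) (hF.rf D hD) hU
        haVU b x
    have hsplit : ∀ b, ∏ D ∈ Ds, marginOut (D ∩ U') (r D) (Function.update x a b) =
        marginOut (G.dis {a} ∩ U') (r (G.dis {a})) (Function.update x a b) *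
          ∏ D ∈ Ds.erase (G.dis {a}), marginOut (D ∩ U) (r D) x := fun b => by
      rw [← Finset.mul_prod_erase _ _ hD₀, Finset.prod_congr rfl (hrest b)]
    rw [hinsert G.V subset_rfl haVU.1, marginOut_insert p (hnotmem _),
      ih U' (hU.inter (isUpperSet_Ioi a)) hVU', ih U' (hU.inter (isUpperSet_Ioi a)) hVU',
      hsplit, hsplit, ← add_mul, ← Finset.mul_prod_erase _ _ hD₀,
      hinsert _ (hF.subset_V hD₀) (isDistrict_dis_singleton haVU.1).2,
      marginOut_insert _ (hnotmem _)]

theorem isCondVersion_gFactor (hF : IsDistrictFactorization G p Ds r)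
    (htop : G.IsTopologicalOrder) {v : α} (hv : v ∈ G.V) :
    IsCondVersion G.V G.W {v} {u | u ∈ G.V ∧ u < v} p (G.gFactor r v) := by
  have hD₀ := hF.dis_singleton_mem hv
  have hker := hF.isKernel _ hD₀
  refine ⟨isKernel_condKernel (fun g => (hker.1 g).1) (fun h => lt_irrefl v h.2)
    fun x y hxy => htop.marginOut_inter_congr (hF.subset_V hD₀) hker (hF.rf _ hD₀)
      (isUpperSet_Ioi v) fun u hu => hxy u ?_, fun x => ?_⟩
  · rcases hu with huW | ⟨huV, hvu⟩
    · exact Or.inr (Or.inr huW)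
    · rcases (not_lt.mp hvu).lt_or_eq with hlt | rfl
      · exact Or.inr (Or.inl ⟨huV, hlt⟩)
      · exact Or.inl rfl
  have hIci : G.V \ {u | u ∈ G.V ∧ u < v} = G.V ∩ Set.Ici v := by
    ext u
    simp only [Set.mem_sdiff, Set.mem_ofPred_eq, Set.mem_inter_iff, Set.mem_Ici]
    grind
  have hIoi : G.V \ ({v} ∪ {u | u ∈ G.V ∧ u < v}) = G.V ∩ Set.Ioi v := by
    ext u
    simp only [Set.mem_sdiff, Set.mem_union, Set.mem_singleton_iff, Set.mem_ofPred_eq,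
      Set.mem_inter_iff, Set.mem_Ioi]
    grind
  rw [hIci, hIoi, hF.marginOut_inter_eq_prod htop (isUpperSet_Ici v),
    hF.marginOut_inter_eq_prod htop (isUpperSet_Ioi v), ← Set.Ioi_insert,
    ← Finset.mul_prod_erase _ _ hD₀, ← Finset.mul_prod_erase _ _ hD₀,
    Set.inter_insert_of_mem (isDistrict_dis_singleton hv).2, ← mul_assoc, gFactor,
    condKernel_mul_marginOut fun g => (hker.1 g).1]
  congr 1
  refine Finset.prod_congr rfl fun D hD => ?_
  obtain ⟨hne, hD⟩ := Finset.mem_erase.mp hD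
  rw [Set.inter_insert_of_notMem fun hvD => hne (hF.dis_singleton_eq hD hvD).symm]

theorem finprod_gFactor (hF : IsDistrictFactorization G p Ds r) {D : Set α} (hD : D ∈ Ds)
    (x : α → Bool) : ∏ᶠ v ∈ D, G.gFactor r v x = r D x := by
  have hone : marginOut D (r D) x = 1 := (hF.isKernel D hD).2.2 x
  have hchain := prod_condKernel_mul_marginOut (fun g => ((hF.isKernel D hD).1 g).1)
    D.toFinset x
  rw [Set.coe_toFinset, hone, mul_one] at hchain
  rw [finprod_mem_congr rfl fun v hv => by rw [gFactor, hF.dis_singleton_eq hD hv],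
    finprod_mem_eq_toFinset_prod, hchain]

end IsDistrictFactorization

end CADMG

theorem g_formula_general {α : Type} [Fintype α] [LinearOrder α] (G : CADMG α)
    (htop : ∀ e ∈ G.dir, e.1 ∈ G.V → e.1 < e.2)
    (p : (α → Bool) → ℝ)
    (Ds : Finset (Set α)) (hDs : ∀ D, G.IsDistrict D ↔ D ∈ Ds)
    (r : Set α → (α → Bool) → ℝ)
    (hker : ∀ D ∈ Ds, CADMG.IsKernel D (G.paSet D \ D) (r D))
    (hrf : ∀ D ∈ Ds, CADMG.RF (G.induce D) (r D))
    (hfact : ∀ x, p x = ∏ D ∈ Ds, r D x) :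
    ∃ f : α → (α → Bool) → ℝ,
      (∀ v ∈ G.V,
        CADMG.IsCondVersion G.V G.W {v} {u | u ∈ G.V ∧ u < v} p (f v)) ∧
      ∀ D ∈ Ds, ∀ x : α → Bool, r D x = ∏ᶠ v ∈ D, f v x := by
  have hF : CADMG.IsDistrictFactorization G p Ds r := ⟨hDs, hker, hrf, hfact⟩
  exact ⟨G.gFactor r, fun v hv => hF.isCondVersion_gFactor htop hv,
    fun D hD x => (hF.finprod_gFactor hD x).symm⟩

/-- **Proposition 1 (the g-formula).**  Let `G` be a CADMG whose districts are
exactly the members of `Ds`, let `<` be a topological ordering of the random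
vertices (every random vertex precedes its children), and suppose the kernel
`p = p_{V|W}` factorizes as `p = ∏_{D ∈ Ds} r_D`, where each `r_D` is a kernel
for `D` given `pa_G(D) \ D` that recursively factorizes according to `G[D]`.
Then there are suitably chosen versions `f v` of the conditional distributions
of `X_v` given `X_{pre_<(v)}, X_W` such that each factor satisfies
`r_D(x_D | x_{pa(D)\D}) = ∏_{v ∈ D} f v (x)`. -/
theorem g_formula {α : Type} [Fintype α] [LinearOrder α] (G : CADMG α)
    (htop : ∀ e ∈ G.dir, e.1 ∈ G.V → e.1 < e.2)
    (p : (α → Bool) → ℝ) (hp : CADMG.IsKernel G.V G.W p)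
    (Ds : Finset (Set α)) (hDs : ∀ D, G.IsDistrict D ↔ D ∈ Ds)
    (r : Set α → (α → Bool) → ℝ)
    (hker : ∀ D ∈ Ds, CADMG.IsKernel D (G.paSet D \ D) (r D))
    (hrf : ∀ D ∈ Ds, CADMG.RF (G.induce D) (r D))
    (hfact : ∀ x, p x = ∏ D ∈ Ds, r D x) :
    ∃ f : α → (α → Bool) → ℝ,
      (∀ v ∈ G.V,
        CADMG.IsCondVersion G.V G.W {v} {u | u ∈ G.V ∧ u < v} p (f v)) ∧
      ∀ D ∈ Ds, ∀ x : α → Bool, r D x = ∏ᶠ v ∈ D, f v x :=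
  g_formula_general G htop p Ds hDs r hker hrf hfact
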